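/- arXiv:1808.02674 — 3 statements merged into one kernel-verified Lean document; each statement's English description precedes it below -/
import Mathlib

section
/- Let G be a connected bipartite graph on N vertices, HM_n the associated hierarchical graph sequence, and ℓ_k := diam(HM_k) + 1. Then for all k ≥ n one has N_B^n(ℓ_k) = 1, and for all n > k one has N_B^n(ℓ_k) ≤ N^{n−k}. -/
open Filter Finset

/-- A subgraph `B` of a graph `H` is an `ℓ`-box if any two of its vertices are at
distance at most `ℓ - 1` *within* `B`. -/
def SimpleGraph.IsBox {V : Type*} (H : SimpleGraph V) (ℓ : ℕ) (B : H.Subgraph) : Prop :=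
  ∀ u v : B.verts, B.coe.Reachable u v ∧ B.coe.dist u v ≤ ℓ - 1

/-- `coveringNumber H ℓ` is the minimum number of `ℓ`-boxes whose vertex sets cover `H`. -/
noncomputable def coveringNumber {V : Type*} (H : SimpleGraph V) (ℓ : ℕ) : ℕ :=
  sInf {m : ℕ | ∃ F : Finset H.Subgraph, F.card = m ∧ (∀ B ∈ F, H.IsBox ℓ B) ∧
    ∀ v : V, ∃ B ∈ F, v ∈ B.verts}

/-- The adjacency-generating relation of the hierarchical model `HM_n`: the two words
agree on a (maximal) common prefix of length `k`; beyond the prefix one word has all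
its letters in `V₁` (`typ = true`) and the other has all its letters in `V₂`
(`typ = false`); and every coordinate pair beyond the prefix is an edge of the base
graph `G`. -/
def HMRel (N : ℕ) (G : SimpleGraph (Fin N)) (typ : Fin N → Bool) (n : ℕ)
    (x y : Fin n → Fin N) : Prop :=
  ∃ k : Fin n,
    (∀ i : Fin n, i < k → x i = y i) ∧
    (∃ t : Bool, (∀ i : Fin n, k ≤ i → typ (x i) = t) ∧
                 (∀ i : Fin n, k ≤ i → typ (y i) = !t)) ∧
    (∀ i : Fin n, k ≤ i → G.Adj (x i) (y i))

/-- The hierarchical graph `HM_n` on words of length `n` over the alphabet `Fin N`. -/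
def HM (N : ℕ) (G : SimpleGraph (Fin N)) (typ : Fin N → Bool) (n : ℕ) :
    SimpleGraph (Fin n → Fin N) :=
  SimpleGraph.fromRel (HMRel N G typ n)

/-! The graph `HM_n` is connected: the words with a given first letter contain a copy of
`HM_{n-1}`, and the constant words form a copy of `G`. For `n ≥ 1`, forgetting a prefix of
length `m` is a surjective homomorphism `HM_{m+n} → HM_n`, so for `n ≤ k` every two words of
`HM_n` are joined by a walk of length at most `diam HM_k` and the whole graph is one `ℓ_k`-box.
For `k ≤ n`, fixing a prefix of length `n - k` embeds `HM_k` into `HM_n`; the `N^(n-k)` images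
are `ℓ_k`-boxes covering `HM_n`. -/

namespace SimpleGraph

variable {V W : Type*} {H : SimpleGraph V} {K : SimpleGraph W}

lemma Reachable.dist_map_le (f : K →g H) {u v : W} (h : K.Reachable u v) :
    H.dist (f u) (f v) ≤ K.dist u v := by
  obtain ⟨p, hp⟩ := h.exists_walk_length_eq_dist
  calc H.dist (f u) (f v) ≤ (p.map f).length := dist_le _
    _ = K.dist u v := by rw [Walk.length_map, hp]

lemma isBox_map_top [Finite W] (hK : K.Connected) (f : K →g H) {ℓ : ℕ} (hℓ : K.diam < ℓ) :
    H.IsBox ℓ ((⊤ : K.Subgraph).map f) := by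
  rintro ⟨_, a, -, rfl⟩ ⟨_, b, -, rfl⟩
  let g : K →g ((⊤ : K.Subgraph).map f).coe :=
    ⟨fun x ↦ ⟨f x, x, trivial, rfl⟩, fun h ↦ ⟨_, _, h, rfl, rfl⟩⟩
  have hab := hK.preconnected a b
  have hdiam : K.ediam ≠ ⊤ := by
    have := hK.nonempty
    exact connected_iff_ediam_ne_top.mp hK
  refine ⟨hab.map g, ?_⟩
  calc _ ≤ K.dist a b := hab.dist_map_le g
    _ ≤ K.diam := dist_le_diam hdiam
    _ ≤ ℓ - 1 := by omega

def IsBoxCover (H : SimpleGraph V) (ℓ : ℕ) (F : Finset H.Subgraph) : Prop :=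
  (∀ B ∈ F, H.IsBox ℓ B) ∧ ∀ v : V, ∃ B ∈ F, v ∈ B.verts

lemma coveringNumber_le_card {ℓ : ℕ} {F : Finset H.Subgraph} (hF : H.IsBoxCover ℓ F) :
    coveringNumber H ℓ ≤ F.card :=
  Nat.sInf_le ⟨F, rfl, hF⟩

lemma coveringNumber_pos [Nonempty V] {ℓ : ℕ} {F : Finset H.Subgraph} (hF : H.IsBoxCover ℓ F) :
    0 < coveringNumber H ℓ := by
  refine Nat.pos_of_ne_zero fun h ↦ ?_
  rcases Nat.sInf_eq_zero.mp h with ⟨F₀, hcard, -, hcov⟩ | hempty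
  · obtain ⟨B, hB, -⟩ := hcov (Classical.arbitrary V)
    simp [Finset.card_eq_zero.mp hcard] at hB
  · exact hempty.subset ⟨F, rfl, hF⟩

lemma coveringNumber_eq_one_of_surjective [Finite W] (hK : K.Connected) {ℓ : ℕ}
    (hℓ : K.diam < ℓ) (f : K →g H) (hf : Function.Surjective f) :
    coveringNumber H ℓ = 1 := by
  have : Nonempty V := hK.nonempty.map f
  have hF : H.IsBoxCover ℓ {(⊤ : K.Subgraph).map f} := by
    refine ⟨fun B hB ↦ ?_, fun v ↦ ?_⟩
    · rw [Finset.mem_singleton.mp hB]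
      exact isBox_map_top hK f hℓ
    · obtain ⟨a, rfl⟩ := hf v
      exact ⟨_, Finset.mem_singleton_self _, a, trivial, rfl⟩
  exact le_antisymm (coveringNumber_le_card hF) (coveringNumber_pos hF)

lemma coveringNumber_le_of_homs {ι : Type*} [Fintype ι] [Finite W] (hK : K.Connected) {ℓ : ℕ}
    (hℓ : K.diam < ℓ) (f : ι → K →g H) (hf : ∀ v, ∃ i a, f i a = v) :
    coveringNumber H ℓ ≤ Fintype.card ι := by
  classical
  have hF : H.IsBoxCover ℓ (Finset.univ.image fun i ↦ (⊤ : K.Subgraph).map (f i)) := by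
    refine ⟨fun B hB ↦ ?_, fun v ↦ ?_⟩
    · obtain ⟨i, -, rfl⟩ := Finset.mem_image.mp hB
      exact isBox_map_top hK (f i) hℓ
    · obtain ⟨i, a, rfl⟩ := hf v
      exact ⟨_, Finset.mem_image_of_mem _ (Finset.mem_univ i), a, trivial, rfl⟩
  exact (coveringNumber_le_card hF).trans Finset.card_image_le

end SimpleGraph

open SimpleGraph

variable {N : ℕ} {G : SimpleGraph (Fin N)} {typ : Fin N → Bool}

namespace HMRel

lemma ne {n : ℕ} {x y : Fin n → Fin N} (h : HMRel N G typ n x y) : x ≠ y := by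
  obtain ⟨c, -, ⟨t, hx, hy⟩, -⟩ := h
  intro hxy
  have := hx c le_rfl
  rw [hxy, hy c le_rfl] at this
  exact Bool.not_ne_self t this

lemma append {m k : ℕ} (p : Fin m → Fin N) {x y : Fin k → Fin N} (h : HMRel N G typ k x y) :
    HMRel N G typ (m + k) (Fin.append p x) (Fin.append p y) := by
  obtain ⟨c, hpre, ⟨t, hx, hy⟩, hadj⟩ := h
  have hsuffix : ∀ {P : Fin (m + k) → Prop}, (∀ j, c ≤ j → P (Fin.natAdd m j)) →
      ∀ i, Fin.natAdd m c ≤ i → P i := by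
    intro P hP i hi
    induction i using Fin.addCases with
    | left i => simp only [Fin.le_def, Fin.val_natAdd, Fin.val_castAdd] at hi; omega
    | right j => exact hP j ((Fin.natAdd_le_natAdd_iff m).mp hi)
  refine ⟨Fin.natAdd m c, fun i hi ↦ ?_, ⟨t, hsuffix fun j hj ↦ ?_, hsuffix fun j hj ↦ ?_⟩,
    hsuffix fun j hj ↦ ?_⟩
  · induction i using Fin.addCases with
    | left i => simp
    | right j => simpa using hpre j ((Fin.natAdd_lt_natAdd_iff m).mp hi)
  · simpa using hx j hj
  · simpa using hy j hj
  · simpa using hadj j hj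

lemma drop {m n : ℕ} (hn : n ≠ 0) {x y : Fin (m + n) → Fin N} (h : HMRel N G typ (m + n) x y) :
    HMRel N G typ n (x ∘ Fin.natAdd m) (y ∘ Fin.natAdd m) := by
  obtain ⟨c, hpre, ⟨t, hx, hy⟩, hadj⟩ := h
  have hc : (c : ℕ) - m < n := by omega
  have hsuffix : ∀ i : Fin n, (⟨c - m, hc⟩ : Fin n) ≤ i → c ≤ Fin.natAdd m i := by
    intro i hi
    simp only [Fin.le_def, Fin.val_natAdd] at hi ⊢
    omega
  refine ⟨⟨c - m, hc⟩, fun i hi ↦ hpre _ ?_, ⟨t, fun i hi ↦ hx _ (hsuffix i hi),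
    fun i hi ↦ hy _ (hsuffix i hi)⟩, fun i hi ↦ hadj _ (hsuffix i hi)⟩
  simp only [Fin.lt_def, Fin.val_natAdd] at hi ⊢
  omega

end HMRel

namespace HM

lemma adj_iff {n : ℕ} {x y : Fin n → Fin N} :
    (HM N G typ n).Adj x y ↔ HMRel N G typ n x y ∨ HMRel N G typ n y x := by
  rw [HM, fromRel_adj, and_iff_right_iff_imp]
  rintro (h | h)
  exacts [h.ne, h.ne.symm]

def homOfRel {k n : ℕ} (f : (Fin k → Fin N) → Fin n → Fin N)
    (hf : ∀ {x y}, HMRel N G typ k x y → HMRel N G typ n (f x) (f y)) :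
    HM N G typ k →g HM N G typ n where
  toFun := f
  map_rel' := by
    simp only [adj_iff]
    rintro _ _ (h | h)
    exacts [.inl (hf h), .inr (hf h)]

def appendHom {m k : ℕ} (p : Fin m → Fin N) : HM N G typ k →g HM N G typ (m + k) :=
  homOfRel (Fin.append p) (HMRel.append p)

def dropHom {m n : ℕ} (hn : n ≠ 0) : HM N G typ (m + n) →g HM N G typ n :=
  homOfRel (· ∘ Fin.natAdd m) (HMRel.drop hn)

def constHom (hbip : ∀ a b : Fin N, G.Adj a b → typ a ≠ typ b) {n : ℕ} (hn : n ≠ 0) :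
    G →g HM N G typ n where
  toFun a _ := a
  map_rel' {a b} hab := by
    refine adj_iff.mpr (.inl ⟨⟨0, Nat.pos_of_ne_zero hn⟩, fun i hi ↦ ?_,
      ⟨typ a, fun _ _ ↦ rfl, fun _ _ ↦ Bool.ne_not.mp ?_⟩, fun _ _ ↦ hab⟩)
    · simp [Fin.lt_def] at hi
    · simpa [eq_comm] using hbip a b hab

theorem connected (hconn : G.Connected) (hbip : ∀ a b : Fin N, G.Adj a b → typ a ≠ typ b)
    (n : ℕ) : (HM N G typ n).Connected := by
  have := hconn.nonempty
  induction n with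
  | zero => exact ⟨fun x y ↦ Subsingleton.elim x y ▸ Reachable.refl x⟩
  | succ k ih =>
    rw [Nat.add_comm]
    have to_const (x : Fin (1 + k) → Fin N) :
        (HM N G typ (1 + k)).Reachable x fun _ ↦ x (Fin.castAdd k 0) := by
      set a := x (Fin.castAdd k 0)
      have hx : Fin.append (fun _ : Fin 1 ↦ a) (x ∘ Fin.natAdd 1) = x := by
        ext i
        induction i using Fin.addCases <;> simp [a, Subsingleton.elim _ (0 : Fin 1)]
      have ha : Fin.append (fun _ : Fin 1 ↦ a) (fun _ : Fin k ↦ a) = fun _ ↦ a := by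
        ext i
        induction i using Fin.addCases <;> simp
      have := (ih.preconnected (x ∘ Fin.natAdd 1) fun _ ↦ a).map (appendHom (fun _ : Fin 1 ↦ a))
      rwa [appendHom, homOfRel, RelHom.coeFn_mk, hx, ha] at this
    exact ⟨fun x y ↦ (to_const x).trans <|
      ((hconn.preconnected _ _).map (constHom hbip (by omega))).trans (to_const y).symm⟩

theorem coveringNumber_eq_one (hconn : G.Connected)
    (hbip : ∀ a b : Fin N, G.Adj a b → typ a ≠ typ b) {n k : ℕ} (hnk : n ≤ k) :
    coveringNumber (HM N G typ n) ((HM N G typ k).diam + 1) = 1 := by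
  obtain ⟨m, rfl⟩ := Nat.exists_eq_add_of_le' hnk
  rcases Nat.eq_zero_or_pos n with rfl | hn
  · refine coveringNumber_eq_one_of_surjective (connected hconn hbip 0) ?_ Hom.id
      Function.surjective_id
    simp [diam_eq_zero.mpr (.inr inferInstance)]
  · have ⟨a⟩ := hconn.nonempty
    refine coveringNumber_eq_one_of_surjective (connected hconn hbip _) (Nat.lt_succ_self _)
      (dropHom hn.ne') fun x ↦ ⟨Fin.append (fun _ : Fin m ↦ a) x, ?_⟩
    ext i
    simp [dropHom, homOfRel]

theorem coveringNumber_le_pow (hconn : G.Connected)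
    (hbip : ∀ a b : Fin N, G.Adj a b → typ a ≠ typ b) {n k : ℕ} (hkn : k ≤ n) :
    coveringNumber (HM N G typ n) ((HM N G typ k).diam + 1) ≤ N ^ (n - k) := by
  obtain ⟨m, rfl⟩ := Nat.exists_eq_add_of_le' hkn
  calc coveringNumber (HM N G typ (m + k)) ((HM N G typ k).diam + 1)
      ≤ Fintype.card (Fin m → Fin N) :=
        coveringNumber_le_of_homs (connected hconn hbip k) (Nat.lt_succ_self _) appendHom
          fun x ↦ ⟨fun i ↦ x (Fin.castAdd k i), fun i ↦ x (Fin.natAdd m i),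
            Fin.append_castAdd_natAdd⟩
    _ = N ^ (m + k - k) := by simp

end HM

theorem hm_boxing_upper_general (N : ℕ) (G : SimpleGraph (Fin N)) (typ : Fin N → Bool)
    (hconn : G.Connected)
    (hbip : ∀ x y : Fin N, G.Adj x y → typ x ≠ typ y)
    (n : ℕ) :
    (∀ k : ℕ, n ≤ k →
      coveringNumber (HM N G typ n) ((HM N G typ k).diam + 1) = 1) ∧
    (∀ k : ℕ, k < n →
      coveringNumber (HM N G typ n) ((HM N G typ k).diam + 1) ≤ N ^ (n - k)) :=
  ⟨fun _ hnk ↦ HM.coveringNumber_eq_one hconn hbip hnk,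
    fun _ hkn ↦ HM.coveringNumber_le_pow hconn hbip hkn.le⟩

/-- With `ℓ_k := diam(HM_k) + 1`, we have `N_B^n(ℓ_k) = 1` for all
`k ≥ n`, and `N_B^n(ℓ_k) ≤ N^(n-k)` for all `n > k`. -/
theorem hm_boxing_upper (N : ℕ) (G : SimpleGraph (Fin N)) (typ : Fin N → Bool)
    (hconn : G.Connected)
    (hbip : ∀ x y : Fin N, G.Adj x y → typ x ≠ typ y)
    (hV1 : ∃ x, typ x = true) (hV2 : ∃ x, typ x = false)
    (n : ℕ) :
    (∀ k : ℕ, n ≤ k →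
      coveringNumber (HM N G typ n) ((HM N G typ k).diam + 1) = 1) ∧
    (∀ k : ℕ, k < n →
      coveringNumber (HM N G typ n) ((HM N G typ k).diam + 1) ≤ N ^ (n - k)) :=
  hm_boxing_upper_general N G typ hconn hbip n
end

section
/- In the Song–Havlin–Makse model with parameter p = 1, started from a tree SHM_0, and with ℓ_k := diam(SHM¹_k) + 1, the minimum number of ℓ_k-boxes needed to cover SHM¹_n satisfies N_B^n(ℓ_k) ≥ V(n − k − ⌈diam(SHM_0)/2⌉) whenever n ≥ k + ⌈diam(SHM_0)/2⌉. -/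
open Filter Finset

/-- One growth step of the Song–Havlin–Makse model with `p = 1` (Mode I only):
every old edge is kept and every old vertex `v` receives `m · deg(v)` new pendant
(leaf) neighbours. -/
def shmStep {V : Type} (m : ℕ) (G : SimpleGraph V) :
    SimpleGraph (V ⊕ (Σ v : V, Fin (m * (G.neighborSet v).ncard))) :=
  SimpleGraph.fromRel (fun a b =>
    match a, b with
    | Sum.inl u, Sum.inl v => G.Adj u v
    | Sum.inl u, Sum.inr w => u = w.1
    | _, _ => False)

/-- The Song–Havlin–Makse graph sequence with `p = 1` (Mode I only), started from the
graph `G0`: `(SHM m V0 G0 n).2` is the graph at time `n`, on vertex type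
`(SHM m V0 G0 n).1`. -/
def SHM (m : ℕ) (V0 : Type) (G0 : SimpleGraph V0) : (n : ℕ) → Σ V : Type, SimpleGraph V
  | 0 => ⟨V0, G0⟩
  | n + 1 => ⟨_, shmStep m (SHM m V0 G0 n).2⟩

/-! Two distinct vertices of `SHM¹_j` are at distance at least `1`. Follow each of them down
the growth process, stepping at every generation to a freshly attached leaf: a leaf is one step
further than its parent from every other vertex, so each step adds `2` to the distance, and after
`t` steps the `V(j)` descendants in `SHM¹_{j+t}` are pairwise at distance at least `2t + 1`. No
box of diameter at most `2t` contains two of them. Each growth step raises the diameter by at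
most `2`, so `ℓ_k ≤ 2(k + ⌈diam SHM_0 / 2⌉) + 1`, and `t = k + ⌈diam SHM_0 / 2⌉` works. When
`SHM_0` is a single vertex nothing ever grows and the bound is `1`. -/

open SimpleGraph Sum

section shmStep

variable {V : Type} {m : ℕ} {G : SimpleGraph V}

abbrev shmStepVerts (m : ℕ) (G : SimpleGraph V) : Type :=
  V ⊕ (Σ v : V, Fin (m * (G.neighborSet v).ncard))

lemma shmStep_adj_inl_inl {u v : V} : (shmStep m G).Adj (inl u) (inl v) ↔ G.Adj u v := by
  simp only [shmStep, fromRel_adj]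
  exact ⟨fun ⟨_, h⟩ => h.elim id G.adj_symm, fun h => ⟨by simpa using h.ne, .inl h⟩⟩

lemma shmStep_adj_inl_inr {u : V} {w : Σ v : V, Fin (m * (G.neighborSet v).ncard)} :
    (shmStep m G).Adj (inl u) (inr w) ↔ u = w.1 := by
  simp [shmStep, fromRel_adj]

lemma shmStep_adj_inr {w : Σ v : V, Fin (m * (G.neighborSet v).ncard)} {x : shmStepVerts m G} :
    (shmStep m G).Adj (inr w) x ↔ x = inl w.1 := by
  rcases x with u | w'
  · rw [adj_comm, shmStep_adj_inl_inr, inl.injEq, eq_comm]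
  · simp [shmStep, fromRel_adj]

def shmStepInclusion (m : ℕ) (G : SimpleGraph V) : G →g shmStep m G :=
  ⟨inl, shmStep_adj_inl_inl.2⟩

lemma shmStep_adj_elim {a b : shmStepVerts m G} (h : (shmStep m G).Adj a b) :
    G.Adj (Sum.elim id Sigma.fst a) (Sum.elim id Sigma.fst b) ∨
      Sum.elim id Sigma.fst a = Sum.elim id Sigma.fst b := by
  rcases a with u | w <;> rcases b with v | w'
  · exact .inl (shmStep_adj_inl_inl.1 h)
  · exact .inr (shmStep_adj_inl_inr.1 h)
  · exact .inr (inl_injective (shmStep_adj_inr.1 h)).symm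
  · exact absurd (shmStep_adj_inr.1 h) inr_ne_inl

lemma shmStep_dist_inl_elim_le_one (x : shmStepVerts m G) :
    (shmStep m G).dist x (inl (Sum.elim id Sigma.fst x)) ≤ 1 := by
  rcases x with v | w
  · simp
  · exact (dist_eq_one_iff_adj.2 (shmStep_adj_inr.2 rfl)).le

lemma shmStep_dist_elim_le_length (hc : G.Connected) {a b : shmStepVerts m G}
    (p : (shmStep m G).Walk a b) :
    G.dist (Sum.elim id Sigma.fst a) (Sum.elim id Sigma.fst b) ≤ p.length := by
  induction p with
  | nil => simp
  | @cons a c b h p ih =>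
    rw [Walk.length_cons]
    rcases shmStep_adj_elim h with h' | h'
    · have := hc.dist_triangle (u := Sum.elim id Sigma.fst a) (v := Sum.elim id Sigma.fst c)
        (w := Sum.elim id Sigma.fst b)
      rw [dist_eq_one_iff_adj.2 h'] at this
      omega
    · rw [h']
      omega

lemma shmStep_reachable_inl_elim (x : shmStepVerts m G) :
    (shmStep m G).Reachable x (inl (Sum.elim id Sigma.fst x)) := by
  rcases x with v | w
  · rfl
  · exact (shmStep_adj_inr.2 rfl).reachable

lemma shmStep_connected (hc : G.Connected) : (shmStep m G).Connected := by
  have := hc.nonempty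
  refine (connected_iff _).2 ⟨fun a b => ?_, ⟨inl (Classical.arbitrary V)⟩⟩
  exact (shmStep_reachable_inl_elim a).trans <|
    ((hc _ _).map (shmStepInclusion m G)).trans (shmStep_reachable_inl_elim b).symm

lemma shmStep_dist_inl_inl (hc : G.Connected) (u v : V) :
    (shmStep m G).dist (inl u) (inl v) = G.dist u v := by
  refine le_antisymm ?_ ?_
  · obtain ⟨p, hp⟩ := hc.exists_walk_length_eq_dist u v
    calc (shmStep m G).dist (inl u) (inl v) ≤ (p.map (shmStepInclusion m G)).length := dist_le _
      _ = G.dist u v := by rw [Walk.length_map, hp]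
  · obtain ⟨p, hp⟩ := (shmStep_connected hc).exists_walk_length_eq_dist (inl u) (inl v)
    simpa [hp] using shmStep_dist_elim_le_length hc p

lemma shmStep_dist_inr (hc : G.Connected) {w : Σ v : V, Fin (m * (G.neighborSet v).ncard)}
    {x : shmStepVerts m G} (hx : x ≠ inr w) :
    (shmStep m G).dist (inr w) x = (shmStep m G).dist (inl w.1) x + 1 := by
  have hadj : (shmStep m G).Adj (inr w) (inl w.1) := shmStep_adj_inr.2 rfl
  refine le_antisymm ?_ ?_
  · have := (shmStep_connected (m := m) hc).dist_triangle (u := inr w) (v := inl w.1) (w := x)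
    rw [dist_eq_one_iff_adj.2 hadj] at this
    omega
  · obtain ⟨p, hp⟩ := (shmStep_connected hc).exists_walk_length_eq_dist (inr w) x
    cases p with
    | nil => exact absurd rfl hx.symm
    | cons h q =>
      obtain rfl := shmStep_adj_inr.1 h
      have := dist_le q
      rw [Walk.length_cons] at hp
      omega

lemma shmStep_dist_inr_inr (hc : G.Connected) {w w' : Σ v : V, Fin (m * (G.neighborSet v).ncard)}
    (hne : w ≠ w') : (shmStep m G).dist (inr w) (inr w') = G.dist w.1 w'.1 + 2 := by
  rw [shmStep_dist_inr hc (inr_injective.ne hne.symm), dist_comm, shmStep_dist_inr hc inl_ne_inr,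
    shmStep_dist_inl_inl hc, dist_comm]

lemma shmStep_dist_le (hc : G.Connected) (a b : shmStepVerts m G) :
    (shmStep m G).dist a b ≤ G.dist (Sum.elim id Sigma.fst a) (Sum.elim id Sigma.fst b) + 2 := by
  have hc' := shmStep_connected (m := m) hc
  have h₁ := hc'.dist_triangle (u := a) (v := inl (Sum.elim id Sigma.fst a)) (w := b)
  have h₂ := hc'.dist_triangle (u := inl (Sum.elim id Sigma.fst a))
    (v := inl (Sum.elim id Sigma.fst b)) (w := b)
  have ha := shmStep_dist_inl_elim_le_one a
  have hb := shmStep_dist_inl_elim_le_one b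
  rw [dist_comm] at hb
  rw [shmStep_dist_inl_inl hc] at h₂
  omega

lemma shmStep_diam_le [Finite V] (hc : G.Connected) : (shmStep m G).diam ≤ G.diam + 2 := by
  have := hc.nonempty
  obtain ⟨a, b, hab⟩ := (shmStep m G).exists_dist_eq_diam
  have := dist_le_diam (connected_iff_ediam_ne_top.1 hc)
    (u := Sum.elim id Sigma.fst a) (v := Sum.elim id Sigma.fst b)
  have := shmStep_dist_le (m := m) hc a b
  omega

instance [Subsingleton V] : Subsingleton (shmStepVerts m G) := by
  have : IsEmpty (Σ v : V, Fin (m * (G.neighborSet v).ncard)) := ⟨fun ⟨v, i⟩ => by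
    have hv : G.neighborSet v = ∅ :=
      Set.eq_empty_of_forall_notMem fun w h => G.ne_of_adj h (Subsingleton.elim _ _)
    rw [hv, Set.ncard_empty, mul_zero] at i
    exact i.elim0⟩
  exact (Equiv.sumEmpty V _).subsingleton

end shmStep

section Boxes

variable {W : Type*} {H : SimpleGraph W} {ℓ : ℕ}

lemma SimpleGraph.IsBox.dist_le {B : H.Subgraph} (hB : H.IsBox ℓ B) {a b : W}
    (ha : a ∈ B.verts) (hb : b ∈ B.verts) : H.dist a b ≤ ℓ - 1 := by
  obtain ⟨hr, hd⟩ := hB ⟨a, ha⟩ ⟨b, hb⟩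
  obtain ⟨p, hp⟩ := hr.exists_walk_length_eq_dist
  calc H.dist a b ≤ (p.map B.hom).length := SimpleGraph.dist_le _
    _ ≤ ℓ - 1 := by rwa [Walk.length_map, hp]

lemma SimpleGraph.isBox_singletonSubgraph (v : W) : H.IsBox ℓ (H.singletonSubgraph v) := by
  rintro ⟨u, rfl : u = v⟩ ⟨u', rfl : u' = u⟩
  exact ⟨.rfl, by simp⟩

lemma card_le_coveringNumber_of_le_dist [Finite W] {α : Type*} (f : α → W) (hℓ : 0 < ℓ)
    (hf : ∀ a b, a ≠ b → ℓ ≤ H.dist (f a) (f b)) : Nat.card α ≤ coveringNumber H ℓ := by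
  classical
  have := Fintype.ofFinite W
  refine le_csInf ⟨_, univ.image H.singletonSubgraph, rfl, ?_,
    fun v => ⟨_, mem_image_of_mem _ (mem_univ v), rfl⟩⟩ ?_
  · simp only [mem_image, mem_univ, true_and]
    rintro _ ⟨v, rfl⟩
    exact isBox_singletonSubgraph v
  rintro s ⟨F, rfl, hbox, hcov⟩
  choose B hBF hfB using fun a => hcov (f a)
  have hinj : Function.Injective fun a => (⟨B a, hBF a⟩ : F) := by
    intro a b hab
    by_contra hne
    have := (hbox _ (hBF a)).dist_le (hfB a) (Subtype.mk.inj hab ▸ hfB b)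
    have := hf a b hne
    omega
  simpa using Nat.card_le_card_of_injective _ hinj

end Boxes

namespace SHM

variable {m : ℕ} {V0 : Type} {G0 : SimpleGraph V0}

instance finite_verts [Finite V0] : ∀ n, Finite (SHM m V0 G0 n).1
  | 0 => ‹_›
  | n + 1 => have := finite_verts n; inferInstanceAs (Finite (_ ⊕ _))

instance nontrivial_verts [Nontrivial V0] : ∀ n, Nontrivial (SHM m V0 G0 n).1
  | 0 => ‹_›
  | n + 1 => have := nontrivial_verts n; inl_injective.nontrivial

instance subsingleton_verts [Subsingleton V0] : ∀ n, Subsingleton (SHM m V0 G0 n).1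
  | 0 => ‹_›
  | n + 1 =>
    have := subsingleton_verts n
    inferInstanceAs (Subsingleton (shmStepVerts m _))

lemma connected (hc : G0.Connected) : ∀ n, (SHM m V0 G0 n).2.Connected
  | 0 => hc
  | n + 1 => shmStep_connected (connected hc n)

lemma diam_le [Finite V0] (hc : G0.Connected) : ∀ n, (SHM m V0 G0 n).2.diam ≤ G0.diam + 2 * n
  | 0 => le_rfl
  | n + 1 => by
    have := shmStep_diam_le (m := m) (connected (m := m) hc n)
    have := diam_le hc n
    simp only [SHM] at *
    omega

lemma leafCount_pos [Finite V0] [Nontrivial V0] (hm : 0 < m) (hc : G0.Connected) (n : ℕ)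
    (x : (SHM m V0 G0 n).1) : 0 < m * ((SHM m V0 G0 n).2.neighborSet x).ncard :=
  Nat.mul_pos hm <| (Set.ncard_pos (Set.toFinite _)).2 <|
    (connected hc n).preconnected.exists_adj_of_nontrivial x

def descendant [Finite V0] [Nontrivial V0] (hm : 0 < m) (hc : G0.Connected) (j : ℕ) :
    (t : ℕ) → (SHM m V0 G0 j).1 → (SHM m V0 G0 (j + t)).1
  | 0 => id
  | t + 1 => fun v => inr ⟨descendant hm hc j t v, ⟨0, leafCount_pos hm hc _ _⟩⟩

lemma dist_descendant [Finite V0] [Nontrivial V0] (hm : 0 < m) (hc : G0.Connected) (j t : ℕ)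
    {v w : (SHM m V0 G0 j).1} (hvw : v ≠ w) :
    (SHM m V0 G0 (j + t)).2.dist (descendant hm hc j t v) (descendant hm hc j t w) =
      (SHM m V0 G0 j).2.dist v w + 2 * t := by
  induction t with
  | zero => rfl
  | succ t ih =>
    have hne : descendant hm hc j t v ≠ descendant hm hc j t w := fun h => by
      have := (connected hc j).pos_dist_of_ne hvw
      rw [h, dist_self] at ih
      omega
    calc _ = (SHM m V0 G0 (j + t)).2.dist (descendant hm hc j t v) (descendant hm hc j t w) + 2 :=
          shmStep_dist_inr_inr (connected hc _) fun h => hne (congrArg Sigma.fst h)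
      _ = _ := by rw [ih]; ring

theorem card_le_coveringNumber [Finite V0] (hm : 0 < m) (hc : G0.Connected) {j n ℓ : ℕ}
    (hjn : j ≤ n) (hℓ : 0 < ℓ) (hℓn : ℓ ≤ 2 * (n - j) + 1) :
    Nat.card (SHM m V0 G0 j).1 ≤ coveringNumber (SHM m V0 G0 n).2 ℓ := by
  obtain ⟨t, rfl⟩ := Nat.exists_eq_add_of_le hjn
  rw [Nat.add_sub_cancel_left] at hℓn
  rcases subsingleton_or_nontrivial V0 with _ | _
  · have := (connected (m := m) hc (j + t)).nonempty
    exact card_le_coveringNumber_of_le_dist (fun _ => Classical.arbitrary _) hℓ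
      fun a b hab => absurd (Subsingleton.elim a b) hab
  · refine card_le_coveringNumber_of_le_dist (descendant hm hc j t) hℓ fun v w hvw => ?_
    have := (connected hc j).pos_dist_of_ne hvw
    rw [dist_descendant hm hc j t hvw]
    omega

end SHM

/-- In the SHM model with `p = 1` started from a tree, with
`ℓ_k := diam(SHM¹_k) + 1`: whenever `n ≥ k + ⌈diam(SHM_0)/2⌉` one has
`N_B^n(ℓ_k) ≥ V(n - k - ⌈diam(SHM_0)/2⌉)`.  (Here `⌈d/2⌉ = (d+1)/2` in `ℕ`.) -/
theorem shm_boxing_lower (m : ℕ) (hm : 1 ≤ m) (V0 : Type) [Fintype V0]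
    (G0 : SimpleGraph V0) (htree : G0.IsTree) (n k : ℕ)
    (h : k + (G0.diam + 1) / 2 ≤ n) :
    Nat.card (SHM m V0 G0 (n - k - (G0.diam + 1) / 2)).1
      ≤ coveringNumber (SHM m V0 G0 n).2 ((SHM m V0 G0 k).2.diam + 1) := by
  have := SHM.diam_le (m := m) htree.1 k
  exact SHM.card_le_coveringNumber hm htree.1 (by omega) (by omega) (by omega)
end

section
/- Let 0 < a ≠ b and define f : ℕ → ℕ⁺ by log f(h) = a if m(m+1) < h ≤ (m+1)² for some m ∈ ℕ, and log f(h) = b otherwise. Then the growth rate of the spherically symmetric tree T_∞^f exists and equals e^{(a+b)/2}, i.e. lim_{n→∞} (1/n) Σ_{h=0}^{n−1} log f(h) = (a+b)/2; however, for every fixed k ≥ 1, the sequence n ↦ Σ_{h=n−k}^{n−1} log f(h) does not converge as n → ∞, so the transfinite fractal dimension of {T_n} does not exist. -/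
open Filter Finset

open scoped Classical

/-- Vertices of the spherically symmetric tree with offspring sequence `f`:
a vertex at depth `n` is a sequence of child-indices, the index chosen at depth `i`
lying in `Fin (f i)`. -/
def SSTVert (f : ℕ → ℕ) : Type := Σ n : ℕ, ∀ i : Fin n, Fin (f i)

/-- Parent-child relation of the spherically symmetric tree: `y` is a child of `x`. -/
def SSTRel (f : ℕ → ℕ) (x y : SSTVert f) : Prop :=
  ∃ h : y.1 = x.1 + 1, ∀ i : Fin x.1, (x.2 i : ℕ) = (y.2 ⟨i.1, by omega⟩ : ℕ)

/-- The spherically symmetric tree with offspring sequence `f`, as a graph on all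
vertices: every vertex at depth `h` has exactly `f h` children. -/
def SST (f : ℕ → ℕ) : SimpleGraph (SSTVert f) := SimpleGraph.fromRel (SSTRel f)

/-- The root of the spherically symmetric tree. -/
def SSTroot (f : ℕ → ℕ) : SSTVert f := ⟨0, fun i => i.elim0⟩

/-- The truncation `T_n` of the spherically symmetric tree at height `n`. -/
def SSTtrunc (f : ℕ → ℕ) (n : ℕ) : SimpleGraph {v : SSTVert f // v.1 ≤ n} :=
  SimpleGraph.induce {v : SSTVert f | v.1 ≤ n} (SST f)

/-- `SSTgen f n` = number of vertices of the spherically symmetric tree at graph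
distance `n` from the root (the size `L_n` of generation `n`). -/
noncomputable def SSTgen (f : ℕ → ℕ) (n : ℕ) : ℕ :=
  Nat.card {v : SSTVert f // (SST f).dist (SSTroot f) v = n}

/-!
The `m`-th `a`-block `(m(m+1), (m+1)²]` and the `m`-th `b`-block `((m+1)², (m+1)(m+2)]` both have
length `m + 1`, so `Σ_{h<n} log f(h)` differs from `n (a+b)/2` by `O(√n)`, which gives the growth
rate. A window of length `k ≤ m` ending at `(m+1)²` lies in an `a`-block and one ending at
`(m+1)(m+2)` in a `b`-block, so the window sums take both values `k a` and `k b` infinitely often.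

For the dimension, `T_n` is covered by the fibres of truncation to depth `n - k`, which are
`(2k+1)`-boxes, while leaves below distinct vertices of depth `n - k` are more than `2k` apart; so
the `(2k+1)`-covering number lies between `L_{n-k}` and `|T_{n-k}|`. As `f ≥ e^{min(a,b)} > 1`,
`|T_n| ≤ C L_n` for a constant `C`. Hence the logarithm of `|T_n|` divided by the
`(2k+1)`-covering number of `T_n` is the window sum of length `k` up to `log C`, and cannot
converge once `k |a - b| > 2 log C`.
-/

open Topology

theorem SimpleGraph.exists_walk_length_eq_of_parent {V : Type*} (G : SimpleGraph V) (z : V)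
    (ρ : V → ℕ) (hz : ∀ x, ρ z ≤ ρ x) (hparent : ∀ x, x ≠ z → ∃ y, G.Adj y x ∧ ρ y + 1 = ρ x)
    (x : V) : ∃ p : G.Walk z x, p.length = ρ x - ρ z := by
  suffices ∀ c x, ρ x = ρ z + c → ∃ p : G.Walk z x, p.length = c from
    this _ x (by have := hz x; omega)
  intro c
  induction c with
  | zero =>
    intro x hx
    by_cases hxz : x = z
    · exact ⟨hxz ▸ .nil, by subst hxz; rfl⟩
    · obtain ⟨y, -, hy⟩ := hparent x hxz
      have := hz y
      omega
  | succ c ih =>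
    intro x hx
    obtain ⟨y, hyx, hy⟩ := hparent x (by rintro rfl; omega)
    obtain ⟨p, hp⟩ := ih y (by omega)
    exact ⟨p.concat hyx, by rw [SimpleGraph.Walk.length_concat, hp]⟩

theorem SimpleGraph.isBox_of_parent {V : Type*} (H : SimpleGraph V) (B : H.Subgraph) (z : B.verts)
    (ρ : B.verts → ℕ) (k : ℕ) (hz : ∀ x, ρ z ≤ ρ x) (hk : ∀ x, ρ x ≤ ρ z + k)
    (hparent : ∀ x, x ≠ z → ∃ y, B.coe.Adj y x ∧ ρ y + 1 = ρ x) : H.IsBox (2 * k + 1) B := by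
  intro u v
  obtain ⟨p, hp⟩ := B.coe.exists_walk_length_eq_of_parent z ρ hz hparent u
  obtain ⟨q, hq⟩ := B.coe.exists_walk_length_eq_of_parent z ρ hz hparent v
  refine ⟨⟨p.reverse.append q⟩, (SimpleGraph.dist_le (p.reverse.append q)).trans ?_⟩
  rw [SimpleGraph.Walk.length_append, SimpleGraph.Walk.length_reverse, hp, hq]
  have := hk u
  have := hk v
  omega

namespace SSTVert

variable {f : ℕ → ℕ}

theorem ext' {x y : SSTVert f} (hd : x.1 = y.1)
    (hc : ∀ j (hjx : j < x.1) (hjy : j < y.1), (x.2 ⟨j, hjx⟩ : ℕ) = y.2 ⟨j, hjy⟩) : x = y := by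
  obtain ⟨n, g⟩ := x
  obtain ⟨m, g'⟩ := y
  obtain rfl : n = m := hd
  obtain rfl : g = g' := funext fun i => Fin.ext (hc i.1 i.2 i.2)
  rfl

def take (v : SSTVert f) (d : ℕ) : SSTVert f :=
  ⟨min d v.1, fun i => v.2 ⟨i.1, lt_of_lt_of_le i.2 (min_le_right d v.1)⟩⟩

@[simp]
theorem take_fst (v : SSTVert f) (d : ℕ) : (v.take d).1 = min d v.1 := rfl

theorem take_of_le {v : SSTVert f} {d : ℕ} (h : v.1 ≤ d) : v.take d = v :=
  ext' (by simpa using h) fun _ _ _ => rfl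

theorem take_take (v : SSTVert f) {d e : ℕ} (h : d ≤ e) : (v.take e).take d = v.take d :=
  ext' (by simp only [take_fst]; omega) fun _ _ _ => rfl

theorem take_zero (v : SSTVert f) : v.take 0 = SSTroot f :=
  ext' (by simp [SSTroot]) fun _ h _ => by simp at h

def pad (hf : ∀ i, 0 < f i) (v : SSTVert f) (n : ℕ) : SSTVert f :=
  ⟨n, fun i => if h : i.1 < v.1 then v.2 ⟨i.1, h⟩ else ⟨0, hf i⟩⟩

theorem pad_take (hf : ∀ i, 0 < f i) {v : SSTVert f} {m n : ℕ} (hv : v.1 = m) (hmn : m ≤ n) :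
    (v.pad hf n).take m = v := by
  subst hv
  exact ext' (show min v.1 n = v.1 by omega) fun j hj hj' => by simp [take, pad, hj']

end SSTVert

section SST

variable {f : ℕ → ℕ}

open SSTVert

theorem sst_adj_depth {x y : SSTVert f} (h : (SST f).Adj x y) :
    y.1 = x.1 + 1 ∨ x.1 = y.1 + 1 := by
  rcases (SimpleGraph.fromRel_adj _ x y).1 h with ⟨-, ⟨hd, -⟩ | ⟨hd, -⟩⟩
  exacts [.inl hd, .inr hd]

theorem sst_adj_take_eq {x y : SSTVert f} (h : (SST f).Adj x y) {m : ℕ} (hx : m ≤ x.1)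
    (hy : m ≤ y.1) : x.take m = y.take m := by
  refine ext' (by simp only [take_fst]; omega) fun j hjx hjy => ?_
  rcases (SimpleGraph.fromRel_adj _ x y).1 h with ⟨-, ⟨_, hc⟩ | ⟨_, hc⟩⟩
  · exact hc ⟨j, by simp only [take_fst] at hjx; omega⟩
  · exact (hc ⟨j, by simp only [take_fst] at hjy; omega⟩).symm

theorem sst_adj_take_succ (v : SSTVert f) {d : ℕ} (hd : d < v.1) :
    (SST f).Adj (v.take d) (v.take (d + 1)) := by
  refine (SimpleGraph.fromRel_adj _ _ _).2 ⟨fun h => ?_, .inl ⟨?_, fun _ => rfl⟩⟩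
  · have := congrArg Sigma.fst h
    simp only [take_fst] at this
    omega
  · simp only [take_fst]
    omega

theorem sst_depth_le_depth_add_length {x y : SSTVert f} (p : (SST f).Walk x y) :
    y.1 ≤ x.1 + p.length := by
  induction p with
  | nil => simp
  | cons h _ ih =>
    rw [SimpleGraph.Walk.length_cons]
    rcases sst_adj_depth h with h | h <;> omega

theorem sst_exists_mem_support_depth_lt {x y : SSTVert f} (p : (SST f).Walk x y) {m : ℕ}
    (hne : x.take m ≠ y.take m) : ∃ w ∈ p.support, w.1 < m := by
  induction p with
  | nil => exact absurd rfl hne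
  | @cons x v y h q ih =>
    by_cases hx : x.1 < m
    · exact ⟨x, by simp, hx⟩
    by_cases hv : v.1 < m
    · exact ⟨v, by simp, hv⟩
    obtain ⟨w, hw, hwm⟩ := ih (by rwa [← sst_adj_take_eq h (by omega) (by omega)])
    exact ⟨w, by simp [hw], hwm⟩

/-- Two vertices with distinct ancestors at depth `m` are joined only through depth `< m`. -/
theorem sst_length_walk_of_take_ne {x y : SSTVert f} (p : (SST f).Walk x y) {m : ℕ}
    (hne : x.take m ≠ y.take m) : x.1 + y.1 + 2 ≤ p.length + 2 * m := by
  classical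
  obtain ⟨w, hw, hwm⟩ := sst_exists_mem_support_depth_lt p hne
  have hx := sst_depth_le_depth_add_length (p.takeUntil w hw).reverse
  have hy := sst_depth_le_depth_add_length (p.dropUntil w hw)
  have hlen := congrArg SimpleGraph.Walk.length (p.take_spec hw)
  rw [SimpleGraph.Walk.length_append] at hlen
  rw [SimpleGraph.Walk.length_reverse] at hx
  omega

theorem sst_dist_root (v : SSTVert f) : (SST f).dist (SSTroot f) v = v.1 := by
  have hparent : ∀ x : SSTVert f, x ≠ SSTroot f → ∃ y, (SST f).Adj y x ∧ y.1 + 1 = x.1 := by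
    intro x hx
    have hx0 : x.1 ≠ 0 := fun h => hx (by rw [← take_of_le (h.le : x.1 ≤ 0), take_zero])
    refine ⟨x.take (x.1 - 1), ?_, by simp only [take_fst]; omega⟩
    simpa [Nat.sub_add_cancel (Nat.pos_of_ne_zero hx0), take_of_le le_rfl] using
      sst_adj_take_succ x (d := x.1 - 1) (by omega)
  obtain ⟨p, hp⟩ := (SST f).exists_walk_length_eq_of_parent (SSTroot f) Sigma.fst
    (fun _ => Nat.zero_le _) hparent v
  obtain ⟨q, hq⟩ := p.reachable.exists_walk_length_eq_dist
  have := sst_depth_le_depth_add_length q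
  have := SimpleGraph.dist_le p
  have : (SSTroot f).1 = 0 := rfl
  omega

end SST

section Counting

variable (f : ℕ → ℕ)

def sstDepthEquiv (n : ℕ) : {v : SSTVert f // v.1 = n} ≃ (∀ i : Fin n, Fin (f i)) where
  toFun x i := x.1.2 ⟨i.1, x.2.symm ▸ i.2⟩
  invFun g := ⟨⟨n, g⟩, rfl⟩
  left_inv := by rintro ⟨⟨m, g⟩, rfl⟩; rfl
  right_inv _ := rfl

def sstDepthLeEquiv (n : ℕ) :
    {v : SSTVert f // v.1 ≤ n} ≃ Σ h : Fin (n + 1), (∀ i : Fin h.1, Fin (f i)) where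
  toFun x := ⟨⟨x.1.1, Nat.lt_succ_of_le x.2⟩, x.1.2⟩
  invFun s := ⟨⟨s.1.1, s.2⟩, Nat.le_of_lt_succ s.1.2⟩
  left_inv _ := rfl
  right_inv _ := rfl

instance (n : ℕ) : Finite {v : SSTVert f // v.1 ≤ n} := .of_equiv _ (sstDepthLeEquiv f n).symm

theorem card_pi_fin (n : ℕ) : Nat.card (∀ i : Fin n, Fin (f i)) = ∏ i ∈ range n, f i := by
  simp [Nat.card_eq_fintype_card, Fintype.card_pi, Fin.prod_univ_eq_prod_range (fun i => f i)]

theorem card_sst_depth_eq (n : ℕ) :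
    Nat.card {v : SSTVert f // v.1 = n} = ∏ i ∈ range n, f i := by
  rw [Nat.card_congr (sstDepthEquiv f n), card_pi_fin]

theorem card_sst_depth_le (n : ℕ) :
    Nat.card {v : SSTVert f // v.1 ≤ n} = ∑ h ∈ range (n + 1), ∏ i ∈ range h, f i := by
  rw [Nat.card_congr (sstDepthLeEquiv f n), Nat.card_sigma,
    ← Fin.sum_univ_eq_sum_range (fun h => ∏ i ∈ range h, f i)]
  exact Finset.sum_congr rfl fun h _ => card_pi_fin f h

theorem sstgen_eq_prod (n : ℕ) : SSTgen f n = ∏ i ∈ range n, f i := by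
  rw [SSTgen, ← card_sst_depth_eq]
  exact Nat.card_congr (Equiv.subtypeEquivRight fun v => by rw [sst_dist_root])

end Counting

section Covering

variable {f : ℕ → ℕ}

open SSTVert

/-- The fibre over `z` of `x ↦ x.take (n - k)` in `T_n`: the singleton `{z}` if `z` has depth
`< n - k`, and the subtree of `T_n` rooted at `z` if `z` has depth `n - k`. -/
def prefixBox (f : ℕ → ℕ) (n k : ℕ) (z : SSTVert f) : (SSTtrunc f n).Subgraph :=
  (⊤ : (SSTtrunc f n).Subgraph).induce {x | x.1.take (n - k) = z}

theorem mem_prefixBox_verts {n k : ℕ} {z : SSTVert f} {x : {v : SSTVert f // v.1 ≤ n}} :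
    x ∈ (prefixBox f n k z).verts ↔ x.1.take (n - k) = z := Iff.rfl

theorem isBox_prefixBox {n k : ℕ} {z : SSTVert f} (hz : z.1 ≤ n - k) :
    (SSTtrunc f n).IsBox (2 * k + 1) (prefixBox f n k z) := by
  have hdepth : ∀ x : (prefixBox f n k z).verts, min (n - k) x.1.1.1 = z.1 := fun x =>
    congrArg Sigma.fst (mem_prefixBox_verts.1 x.2)
  refine (SSTtrunc f n).isBox_of_parent _
    ⟨⟨z, by omega⟩, mem_prefixBox_verts.2 (take_of_le hz)⟩ (fun x => x.1.1.1) k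
    (fun x => by have := hdepth x; dsimp only; omega)
    (fun x => by have := hdepth x; have := x.1.2; dsimp only; omega) fun x hx => ?_
  have hd := hdepth x
  have hlt : z.1 < x.1.1.1 := by
    refine lt_of_le_of_ne (by omega) fun h => hx (Subtype.ext (Subtype.ext ?_))
    exact (take_of_le (by omega)).symm.trans (mem_prefixBox_verts.1 x.2)
  let y : {v : SSTVert f // v.1 ≤ n} :=
    ⟨x.1.1.take (x.1.1.1 - 1), (min_le_right _ _).trans x.1.2⟩
  have hy : y ∈ (prefixBox f n k z).verts := by
    rw [mem_prefixBox_verts, take_take _ (by omega)]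
    exact x.2
  have hadj : (SST f).Adj y.1 x.1.1 := by
    simpa [Nat.sub_add_cancel (show 1 ≤ x.1.1.1 by omega), take_of_le le_rfl] using
      sst_adj_take_succ x.1.1 (d := x.1.1.1 - 1) (by omega)
  exact ⟨⟨y, hy⟩, ⟨hy, x.2, hadj⟩, show min _ _ + 1 = _ by omega⟩

theorem exists_isBox_cover_card_le (n k : ℕ) :
    ∃ F : Finset (SSTtrunc f n).Subgraph, F.card ≤ ∑ h ∈ range (n - k + 1), ∏ i ∈ range h, f i ∧
      (∀ B ∈ F, (SSTtrunc f n).IsBox (2 * k + 1) B) ∧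
      ∀ v : {v : SSTVert f // v.1 ≤ n}, ∃ B ∈ F, v ∈ B.verts := by
  have := Fintype.ofFinite {z : SSTVert f // z.1 ≤ n - k}
  refine ⟨Finset.univ.image fun z : {z : SSTVert f // z.1 ≤ n - k} => prefixBox f n k z.1,
    ?_, fun B hB => ?_, fun x => ?_⟩
  · refine Finset.card_image_le.trans ?_
    rw [Finset.card_univ, ← Nat.card_eq_fintype_card, card_sst_depth_le]
  · obtain ⟨z, -, rfl⟩ := Finset.mem_image.1 hB
    exact isBox_prefixBox z.2
  · let z : {z : SSTVert f // z.1 ≤ n - k} := ⟨x.1.take (n - k), min_le_left _ _⟩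
    exact ⟨_, Finset.mem_image_of_mem _ (Finset.mem_univ z), mem_prefixBox_verts.2 rfl⟩

theorem coveringNumber_le (n k : ℕ) :
    coveringNumber (SSTtrunc f n) (2 * k + 1) ≤ ∑ h ∈ range (n - k + 1), ∏ i ∈ range h, f i := by
  obtain ⟨F, hcard, hbox, hcov⟩ := exists_isBox_cover_card_le (f := f) n k
  refine (Nat.sInf_le ?_).trans hcard
  exact ⟨F, rfl, hbox, hcov⟩

theorem prod_le_card_of_isBox_cover (hf : ∀ i, 0 < f i) {n k : ℕ}
    {F : Finset (SSTtrunc f n).Subgraph} (hbox : ∀ B ∈ F, (SSTtrunc f n).IsBox (2 * k + 1) B)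
    (hcov : ∀ v : {v : SSTVert f // v.1 ≤ n}, ∃ B ∈ F, v ∈ B.verts) :
    ∏ i ∈ range (n - k), f i ≤ F.card := by
  let leaf (z : {z : SSTVert f // z.1 = n - k}) : {v : SSTVert f // v.1 ≤ n} :=
    ⟨z.1.pad hf n, le_rfl⟩
  choose B hBF hleaf using fun z => hcov (leaf z)
  have hinj : Function.Injective fun z => (⟨B z, hBF z⟩ : F) := by
    intro z z' hzz'
    by_contra hne
    have hz' : leaf z' ∈ (B z).verts := by
      rw [show B z = B z' from congrArg Subtype.val hzz']
      exact hleaf z'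
    obtain ⟨hreach, hdist⟩ := hbox _ (hBF z) ⟨leaf z, hleaf z⟩ ⟨leaf z', hz'⟩
    obtain ⟨p, hp⟩ := hreach.exists_walk_length_eq_dist
    let q := (p.map (B z).hom).map (SimpleGraph.Embedding.induce _).toHom
    have hq : q.length = p.length :=
      (SimpleGraph.Walk.length_map _ _).trans (SimpleGraph.Walk.length_map _ _)
    have hsep := sst_length_walk_of_take_ne q (m := n - k) (by
      change (z.1.pad hf n).take (n - k) ≠ (z'.1.pad hf n).take (n - k)
      rwa [pad_take hf z.2 (by omega), pad_take hf z'.2 (by omega), ne_eq, ← Subtype.ext_iff])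
    change n + n + 2 ≤ _ at hsep
    have hkn : k ≤ n := by
      by_contra
      have := z.2
      have := z'.2
      exact hne (Subtype.ext (ext' (by omega) fun j hj _ => by omega))
    omega
  calc ∏ i ∈ range (n - k), f i = Nat.card {z : SSTVert f // z.1 = n - k} :=
        (card_sst_depth_eq f _).symm
    _ ≤ Nat.card F := Nat.card_le_card_of_injective _ hinj
    _ = F.card := Nat.card_eq_finsetCard F

theorem prod_le_coveringNumber (hf : ∀ i, 0 < f i) (n k : ℕ) :
    ∏ i ∈ range (n - k), f i ≤ coveringNumber (SSTtrunc f n) (2 * k + 1) := by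
  obtain ⟨F, -, hbox, hcov⟩ := exists_isBox_cover_card_le (f := f) n k
  refine le_csInf ⟨F.card, F, rfl, hbox, hcov⟩ ?_
  rintro _ ⟨F', rfl, hbox', hcov'⟩
  exact prod_le_card_of_isBox_cover hf hbox' hcov'

end Covering

section Estimates

theorem sum_range_succ_prod_le {x : ℕ → ℝ} {q : ℝ} (hq : 1 < q) (hx : ∀ i, q ≤ x i) (n : ℕ) :
    ∑ h ∈ range (n + 1), ∏ i ∈ range h, x i ≤ q / (q - 1) * ∏ i ∈ range n, x i := by
  have hq1 : 0 < q - 1 := sub_pos.2 hq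
  induction n with
  | zero => simp [le_div_iff₀ hq1]
  | succ n ih =>
    have hP : 0 ≤ ∏ i ∈ range n, x i :=
      prod_nonneg fun i _ => (zero_le_one.trans hq.le).trans (hx i)
    have hgrow : q * ∏ i ∈ range n, x i ≤ (∏ i ∈ range n, x i) * x n := by
      rw [mul_comm]; exact mul_le_mul_of_nonneg_left (hx n) hP
    rw [sum_range_succ, prod_range_succ]
    have : q / (q - 1) * ∏ i ∈ range n, x i ≤ (q / (q - 1) - 1) * ((∏ i ∈ range n, x i) * x n) := by
      rw [show q / (q - 1) - 1 = 1 / (q - 1) by field_simp; ring, div_mul_eq_mul_div,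
        one_div_mul_eq_div]
      exact div_le_div_of_nonneg_right hgrow hq1.le
    linarith

theorem log_sub_log_le_of_le_mul {P T C : ℝ} (hP : 0 < P) (hPT : P ≤ T) (hTC : T ≤ C * P) :
    0 ≤ Real.log T - Real.log P ∧ Real.log T - Real.log P ≤ Real.log C := by
  have hT : 0 < T := hP.trans_le hPT
  have hC : 0 < C := pos_of_mul_pos_left (hT.trans_le hTC) hP.le
  refine ⟨sub_nonneg.2 (Real.log_le_log hP hPT), ?_⟩
  have := Real.log_le_log hT hTC
  rw [Real.log_mul hC.ne' hP.ne'] at this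
  linarith

theorem tendsto_rpow_inv_of_tendsto_log_div {x : ℕ → ℝ} {c : ℝ} (hx : ∀ n, 0 < x n)
    (h : Tendsto (fun n : ℕ => Real.log (x n) / n) atTop (𝓝 c)) :
    Tendsto (fun n : ℕ => x n ^ ((n : ℝ)⁻¹)) atTop (𝓝 (Real.exp c)) :=
  ((Real.continuous_exp.tendsto c).comp h).congr fun n => by
    rw [Function.comp_apply, Real.rpow_def_of_pos (hx n), div_eq_mul_inv]

theorem abs_sub_le_of_tendsto_of_subseq {u w : ℕ → ℝ} {L A D : ℝ} {φ : ℕ → ℕ}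
    (hu : Tendsto u atTop (𝓝 L)) (huw : ∀ᶠ n in atTop, |u n - w n| ≤ D)
    (hφ : Tendsto φ atTop atTop) (hA : ∀ᶠ m in atTop, w (φ m) = A) : |L - A| ≤ D :=
  le_of_tendsto ((continuous_abs.tendsto _).comp ((hu.comp hφ).sub_const A)) <|
    ((hφ.eventually huw).and hA).mono fun m ⟨h, hm⟩ => by
      simpa only [Function.comp_apply, hm] using h

end Estimates

theorem abs_log_card_div_coveringNumber_sub_le {f : ℕ → ℕ} {q : ℝ} (hq : 1 < q)
    (hf : ∀ i, q ≤ (f i : ℝ)) (n k : ℕ) :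
    |Real.log ((Nat.card {v : SSTVert f // v.1 ≤ n} : ℝ) /
        (coveringNumber (SSTtrunc f n) (2 * k + 1) : ℝ)) -
      ∑ h ∈ Ico (n - k) n, Real.log (f h)| ≤ Real.log (q / (q - 1)) := by
  have hf0 : ∀ i, (0 : ℝ) < f i := fun i => (zero_lt_one.trans hq).trans_le (hf i)
  have hP : ∀ m, 0 < ∏ i ∈ range m, (f i : ℝ) := fun m => prod_pos fun i _ => hf0 i
  have hlogP : ∀ m, Real.log (∏ i ∈ range m, (f i : ℝ)) = ∑ i ∈ range m, Real.log (f i) :=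
    fun m => Real.log_prod fun i _ => (hf0 i).ne'
  have hsum : ∀ m, ∏ i ∈ range m, (f i : ℝ) ≤ ∑ h ∈ range (m + 1), ∏ i ∈ range h, (f i : ℝ) :=
    fun m => single_le_sum (f := fun h => ∏ i ∈ range h, (f i : ℝ)) (fun h _ => (hP h).le)
      (self_mem_range_succ m)
  have hcard : (Nat.card {v : SSTVert f // v.1 ≤ n} : ℝ) =
      ∑ h ∈ range (n + 1), ∏ i ∈ range h, (f i : ℝ) := by
    rw [card_sst_depth_le]; push_cast; rfl
  have hN := log_sub_log_le_of_le_mul (hP n) (hcard ▸ hsum n)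
    (hcard ▸ sum_range_succ_prod_le hq hf n)
  have hcov_ge : ∏ i ∈ range (n - k), (f i : ℝ) ≤ coveringNumber (SSTtrunc f n) (2 * k + 1) := by
    exact_mod_cast prod_le_coveringNumber (fun i => by exact_mod_cast hf0 i) n k
  have hcov_le : (coveringNumber (SSTtrunc f n) (2 * k + 1) : ℝ) ≤
      ∑ h ∈ range (n - k + 1), ∏ i ∈ range h, (f i : ℝ) := by
    exact_mod_cast coveringNumber_le n k
  have hcov := log_sub_log_le_of_le_mul (hP (n - k)) hcov_ge
    (hcov_le.trans (sum_range_succ_prod_le hq hf (n - k)))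
  have hwin : ∑ h ∈ Ico (n - k) n, Real.log (f h) =
      ∑ h ∈ range n, Real.log (f h) - ∑ h ∈ range (n - k), Real.log (f h) := by
    rw [← sum_range_add_sum_Ico _ (Nat.sub_le n k)]; ring
  rw [Real.log_div (hcard ▸ (hP n).trans_le (hsum n)).ne' ((hP (n - k)).trans_le hcov_ge).ne',
    hwin, ← hlogP, ← hlogP, abs_le]
  constructor <;> linarith [hN.1, hN.2, hcov.1, hcov.2]

theorem sum_Ico_of_forall_eq {g : ℕ → ℝ} {c : ℝ} {s t : ℕ} (hg : ∀ h ∈ Ico s t, g h = c) :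
    ∑ h ∈ Ico s t, g h = (t - s : ℕ) * c := by
  rw [sum_congr rfl hg, sum_const, Nat.card_Ico, nsmul_eq_mul]

theorem exists_pronic_lt_le {n : ℕ} (hn : 0 < n) : ∃ m, m * (m + 1) < n ∧ n ≤ (m + 1) * (m + 2) := by
  induction n, hn using Nat.le_induction with
  | base => exact ⟨0, by norm_num⟩
  | succ n _ ih =>
    obtain ⟨m, hm, hmn⟩ := ih
    have : (m + 2) * (m + 3) = (m + 1) * (m + 2) + 2 * m + 4 := by ring
    rcases hmn.lt_or_eq with h | h
    · exact ⟨m, by omega, by omega⟩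
    · exact ⟨m + 1, show (m + 1) * (m + 2) < n + 1 by omega,
        show n + 1 ≤ (m + 2) * (m + 3) by omega⟩

noncomputable def blockSeq (a b : ℝ) (h : ℕ) : ℝ :=
  if ∃ m : ℕ, m * (m + 1) < h ∧ h ≤ (m + 1) ^ 2 then a else b

section BlockSeq

variable (a b : ℝ)

theorem blockSeq_of_le_sq {m h : ℕ} (h₁ : m * (m + 1) < h) (h₂ : h ≤ (m + 1) ^ 2) :
    blockSeq a b h = a :=
  if_pos ⟨m, h₁, h₂⟩

theorem blockSeq_of_sq_lt {m h : ℕ} (h₁ : (m + 1) ^ 2 < h) (h₂ : h ≤ (m + 1) * (m + 2)) :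
    blockSeq a b h = b := by
  refine if_neg ?_
  rintro ⟨m', hm₁, hm₂⟩
  rcases le_or_gt m' m with hle | hlt
  · have : (m' + 1) ^ 2 ≤ (m + 1) ^ 2 := by gcongr
    omega
  · have : (m + 1) * (m + 2) ≤ m' * (m' + 1) := Nat.mul_le_mul (by omega) (by omega)
    omega

theorem blockSeq_zero : blockSeq a b 0 = b := if_neg fun ⟨_, h, _⟩ => Nat.not_lt_zero _ h

theorem abs_blockSeq_sub_avg (h : ℕ) : |blockSeq a b h - (a + b) / 2| = |a - b| / 2 := by
  unfold blockSeq
  split_ifs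
  · rw [show a - (a + b) / 2 = (a - b) / 2 by ring, abs_div, abs_two]
  · rw [show b - (a + b) / 2 = -((a - b) / 2) by ring, abs_neg, abs_div, abs_two]

theorem min_le_blockSeq (h : ℕ) : min a b ≤ blockSeq a b h := by
  unfold blockSeq
  split_ifs
  exacts [min_le_left a b, min_le_right a b]

theorem sum_Ico_blockSeq_of_le_sq {m s t : ℕ} (hs : m * (m + 1) < s) (ht : t ≤ (m + 1) ^ 2 + 1) :
    ∑ h ∈ Ico s t, blockSeq a b h = (t - s : ℕ) * a :=
  sum_Ico_of_forall_eq fun h hh => by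
    rw [mem_Ico] at hh
    exact blockSeq_of_le_sq a b (m := m) (by omega) (by omega)

theorem sum_Ico_blockSeq_of_sq_lt {m s t : ℕ} (hs : (m + 1) ^ 2 < s)
    (ht : t ≤ (m + 1) * (m + 2) + 1) : ∑ h ∈ Ico s t, blockSeq a b h = (t - s : ℕ) * b :=
  sum_Ico_of_forall_eq fun h hh => by
    rw [mem_Ico] at hh
    exact blockSeq_of_sq_lt a b (m := m) (by omega) (by omega)

theorem sum_range_pronic_succ_blockSeq (m : ℕ) :
    ∑ h ∈ range (m * (m + 1) + 1), blockSeq a b h = b + m * (m + 1) * ((a + b) / 2) := by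
  induction m with
  | zero => simp [blockSeq_zero]
  | succ m ih =>
    have hsq : (m + 1) ^ 2 = m * (m + 1) + m + 1 := by ring
    have hpr : (m + 1) * (m + 2) = m * (m + 1) + 2 * m + 2 := by ring
    have h₁ : m * (m + 1) + 1 ≤ (m + 1) ^ 2 + 1 := by omega
    have h₂ : (m + 1) ^ 2 + 1 ≤ (m + 1) * (m + 2) + 1 := by omega
    rw [← sum_range_add_sum_Ico _ (h₁.trans h₂), ← sum_Ico_consecutive _ h₁ h₂, ih,
      sum_Ico_blockSeq_of_le_sq a b (m := m) (by omega) le_rfl,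
      sum_Ico_blockSeq_of_sq_lt a b (m := m) (by omega) le_rfl,
      show (m + 1) ^ 2 + 1 - (m * (m + 1) + 1) = m + 1 by omega,
      show (m + 1) * (m + 2) + 1 - ((m + 1) ^ 2 + 1) = m + 1 by omega]
    push_cast
    ring

theorem abs_sum_range_blockSeq_sub_le (n : ℕ) :
    |∑ h ∈ range n, blockSeq a b h - n * ((a + b) / 2)| ≤ |a - b| * (√n + 1) := by
  rcases Nat.eq_zero_or_pos n with rfl | hn
  · simp only [range_zero, sum_empty, CharP.cast_eq_zero, zero_mul, sub_zero, abs_zero]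
    positivity
  obtain ⟨m, hm, hmn⟩ := exists_pronic_lt_le hn
  have hpr : (m + 1) * (m + 2) = m * (m + 1) + 2 * m + 2 := by ring
  have hlen : ((n - (m * (m + 1) + 1) : ℕ) : ℝ) ≤ 2 * m + 1 := by
    exact_mod_cast (show n - (m * (m + 1) + 1) ≤ 2 * m + 1 by omega)
  have htail : |∑ h ∈ Ico (m * (m + 1) + 1) n, (blockSeq a b h - (a + b) / 2)| ≤
      (2 * m + 1) * (|a - b| / 2) := by
    calc _ ≤ ∑ h ∈ Ico (m * (m + 1) + 1) n, |blockSeq a b h - (a + b) / 2| :=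
          abs_sum_le_sum_abs _ _
      _ = (n - (m * (m + 1) + 1) : ℕ) * (|a - b| / 2) :=
          sum_Ico_of_forall_eq fun h _ => abs_blockSeq_sub_avg a b h
      _ ≤ _ := by gcongr
  have hhead : |b - (a + b) / 2| = |a - b| / 2 := by
    simpa [blockSeq_zero] using abs_blockSeq_sub_avg a b 0
  have hm_le : (m : ℝ) ≤ √n :=
    Real.le_sqrt_of_sq_le (by exact_mod_cast (by nlinarith : m ^ 2 ≤ n))
  rw [sum_sub_distrib, sum_const, Nat.card_Ico, nsmul_eq_mul, Nat.cast_sub (by omega)] at htail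
  rw [← sum_range_add_sum_Ico (blockSeq a b) (show m * (m + 1) + 1 ≤ n by omega),
    sum_range_pronic_succ_blockSeq]
  calc _ = |(b - (a + b) / 2) + (∑ h ∈ Ico (m * (m + 1) + 1) n, blockSeq a b h -
        ((n : ℝ) - ((m * (m + 1) + 1 : ℕ) : ℝ)) * ((a + b) / 2))| := by push_cast; ring_nf
    _ ≤ |a - b| / 2 + (2 * m + 1) * (|a - b| / 2) := (abs_add_le _ _).trans (by rw [hhead]; gcongr)
    _ ≤ |a - b| * (√n + 1) := by nlinarith [abs_nonneg (a - b)]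

theorem tendsto_sum_range_blockSeq_div :
    Tendsto (fun n : ℕ => (∑ h ∈ range n, blockSeq a b h) / n) atTop (𝓝 ((a + b) / 2)) := by
  rw [← tendsto_sub_nhds_zero_iff]
  refine squeeze_zero_norm' (a := fun n : ℕ => 2 * |a - b| * (√n)⁻¹) ?_ ?_
  · filter_upwards [eventually_ge_atTop 1] with n hn
    have hn0 : (0 : ℝ) < n := by exact_mod_cast hn
    have hsqrt : 1 ≤ √(n : ℝ) := Real.one_le_sqrt.2 (by exact_mod_cast hn)
    have hcancel : 2 * |a - b| * (√n)⁻¹ * n = 2 * |a - b| * √n := by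
      rw [mul_assoc, inv_mul_eq_div, Real.div_sqrt]
    rw [Real.norm_eq_abs, div_sub' hn0.ne', abs_div, abs_of_pos hn0, div_le_iff₀ hn0, hcancel]
    calc _ ≤ |a - b| * (√n + 1) := abs_sum_range_blockSeq_sub_le a b n
      _ ≤ 2 * |a - b| * √n := by nlinarith [abs_nonneg (a - b)]
  · simpa using ((tendsto_inv_atTop_zero.comp
      (Real.tendsto_sqrt_atTop.comp tendsto_natCast_atTop_atTop)).const_mul (2 * |a - b|))

theorem sum_Ico_sub_sq_blockSeq {k m : ℕ} (hk : k ≤ m) :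
    ∑ h ∈ Ico ((m + 1) ^ 2 - k) ((m + 1) ^ 2), blockSeq a b h = k * a := by
  have hsq : (m + 1) ^ 2 = m * (m + 1) + m + 1 := by ring
  rw [sum_Ico_blockSeq_of_le_sq a b (m := m) (by omega) (by omega),
    show (m + 1) ^ 2 - ((m + 1) ^ 2 - k) = k by omega]

theorem sum_Ico_sub_pronic_blockSeq {k m : ℕ} (hk : k ≤ m) :
    ∑ h ∈ Ico ((m + 1) * (m + 2) - k) ((m + 1) * (m + 2)), blockSeq a b h = k * b := by
  have hpr : (m + 1) * (m + 2) = (m + 1) ^ 2 + m + 1 := by ring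
  rw [sum_Ico_blockSeq_of_sq_lt a b (m := m) (by omega) (by omega),
    show (m + 1) * (m + 2) - ((m + 1) * (m + 2) - k) = k by omega]

theorem mul_abs_sub_le_of_tendsto_window {u : ℕ → ℝ} {L D : ℝ} (k : ℕ)
    (hu : Tendsto u atTop (𝓝 L))
    (huw : ∀ᶠ n in atTop, |u n - ∑ h ∈ Ico (n - k) n, blockSeq a b h| ≤ D) :
    k * |a - b| ≤ 2 * D := by
  have hA := abs_sub_le_of_tendsto_of_subseq hu huw
    (tendsto_atTop_mono (fun m => show m ≤ (m + 1) ^ 2 by nlinarith) tendsto_id)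
    ((eventually_ge_atTop k).mono fun m hm => sum_Ico_sub_sq_blockSeq a b hm)
  have hB := abs_sub_le_of_tendsto_of_subseq hu huw
    (tendsto_atTop_mono (fun m => show m ≤ (m + 1) * (m + 2) by nlinarith) tendsto_id)
    ((eventually_ge_atTop k).mono fun m hm => sum_Ico_sub_pronic_blockSeq a b hm)
  calc (k : ℝ) * |a - b| = |(L - k * b) - (L - k * a)| := by
        rw [show (L - k * b) - (L - k * a) = k * (a - b) by ring, abs_mul, Nat.abs_cast]
    _ ≤ 2 * D := by linarith [abs_sub (L - k * b) (L - k * a)]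

theorem not_tendsto_window_blockSeq (hab : a ≠ b) {k : ℕ} (hk : 1 ≤ k) (c : ℝ) :
    ¬ Tendsto (fun n => ∑ h ∈ Ico (n - k) n, blockSeq a b h) atTop (𝓝 c) := fun hc => by
  have := mul_abs_sub_le_of_tendsto_window a b k hc (D := 0) (.of_forall fun n => by simp)
  have : 0 < (k : ℝ) * |a - b| := mul_pos (by exact_mod_cast hk) (abs_pos.2 (sub_ne_zero.2 hab))
  linarith

theorem exp_min_le_of_log_eq_blockSeq (ha : 0 < a) (hb : 0 < b) {f : ℕ → ℕ}
    (hf : ∀ h, Real.log (f h) = blockSeq a b h) (h : ℕ) : Real.exp (min a b) ≤ f h := by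
  have hlog : min a b ≤ Real.log (f h) := (min_le_blockSeq a b h).trans_eq (hf h).symm
  have hpos : (0 : ℝ) < f h := (Nat.cast_nonneg _).lt_of_ne fun h0 => by
    rw [← h0, Real.log_zero] at hlog
    linarith [lt_min ha hb]
  exact (Real.le_log_iff_exp_le hpos).1 hlog

theorem exists_forall_not_tendsto_log_coveringNumber_div (ha : 0 < a) (hb : 0 < b) (hab : a ≠ b)
    {f : ℕ → ℕ} (hf : ∀ h, Real.log (f h) = blockSeq a b h) :
    ∃ ℓ : ℕ, ∀ c : ℝ, ¬ Tendsto (fun n : ℕ =>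
      Real.log ((coveringNumber (SSTtrunc f n) ℓ : ℝ) /
        (Nat.card {v : SSTVert f // v.1 ≤ n} : ℝ)) / (-(ℓ : ℝ))) atTop (𝓝 c) := by
  set q := Real.exp (min a b)
  have hq : 1 < q := Real.one_lt_exp_iff.2 (lt_min ha hb)
  obtain ⟨k, hk⟩ := exists_nat_gt (2 * Real.log (q / (q - 1)) / |a - b|)
  refine ⟨2 * k + 1, fun c hc => ?_⟩
  have hu : Tendsto (fun n : ℕ => Real.log ((Nat.card {v : SSTVert f // v.1 ≤ n} : ℝ) /
      (coveringNumber (SSTtrunc f n) (2 * k + 1) : ℝ))) atTop (𝓝 ((2 * k + 1 : ℕ) * c)) :=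
    (hc.const_mul _).congr fun n => by
      rw [← inv_div (Nat.card _ : ℝ), Real.log_inv]
      field_simp
  have := mul_abs_sub_le_of_tendsto_window a b k hu <| .of_forall fun n => by
    simpa only [hf] using
      abs_log_card_div_coveringNumber_sub_le hq (exp_min_le_of_log_eq_blockSeq a b ha hb hf) n k
  rw [div_lt_iff₀ (abs_pos.2 (sub_ne_zero.2 hab))] at hk
  linarith

end BlockSeq

theorem sst_example_growth_exists_tau_does_not_general
    (a b : ℝ) (ha : 0 < a) (hb : 0 < b) (hab : a ≠ b)
    (f : ℕ → ℕ)
    (hf : ∀ h : ℕ, Real.log (f h) =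
      if ∃ m : ℕ, m * (m + 1) < h ∧ h ≤ (m + 1) ^ 2 then a else b) :
    Tendsto (fun n : ℕ => (∑ h ∈ Finset.range n, Real.log (f h)) / (n : ℝ))
      atTop (nhds ((a + b) / 2)) ∧
    Tendsto (fun n : ℕ => (SSTgen f n : ℝ) ^ ((n : ℝ)⁻¹))
      atTop (nhds (Real.exp ((a + b) / 2))) ∧
    (∀ k : ℕ, 1 ≤ k →
      ¬ ∃ c : ℝ, Tendsto (fun n : ℕ => ∑ h ∈ Finset.Ico (n - k) n, Real.log (f h))
        atTop (nhds c)) ∧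
    ¬ ∃ (τ : ℝ) (L : ℕ → ℝ),
        (∀ ℓ : ℕ, Tendsto (fun n : ℕ =>
            Real.log ((coveringNumber (SSTtrunc f n) ℓ : ℝ) /
              (Nat.card {v : SSTVert f // v.1 ≤ n} : ℝ)) / (-(ℓ : ℝ)))
          atTop (nhds (L ℓ))) ∧
        Tendsto L atTop (nhds τ) := by
  have hf' : ∀ h, Real.log (f h) = blockSeq a b h := hf
  have hf0 : ∀ h, (0 : ℝ) < f h := fun h =>
    (Real.exp_pos _).trans_le (exp_min_le_of_log_eq_blockSeq a b ha hb hf' h)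
  have havg : Tendsto (fun n : ℕ => (∑ h ∈ range n, Real.log (f h)) / n) atTop
      (𝓝 ((a + b) / 2)) := by
    simpa only [hf'] using tendsto_sum_range_blockSeq_div a b
  refine ⟨havg, ?_, fun k hk ⟨c, hc⟩ => ?_, fun ⟨_, L, hL, _⟩ => ?_⟩
  · refine tendsto_rpow_inv_of_tendsto_log_div (fun n => ?_) (havg.congr fun n => ?_)
    · rw [sstgen_eq_prod, Nat.cast_prod]
      exact prod_pos fun i _ => hf0 i
    · rw [sstgen_eq_prod, Nat.cast_prod, Real.log_prod fun i _ => (hf0 i).ne']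
  · exact not_tendsto_window_blockSeq a b hab hk c (by simpa only [hf'] using hc)
  · obtain ⟨ℓ, hℓ⟩ := exists_forall_not_tendsto_log_coveringNumber_div a b ha hb hab hf'
    exact hℓ _ (hL ℓ)

/-- Let `0 < a`, `0 < b`, `a ≠ b`, and let `f : ℕ → ℕ⁺` satisfy
`log f(h) = a` when `m(m+1) < h ≤ (m+1)²` for some `m ∈ ℕ`, and `log f(h) = b`
otherwise.  Then the growth rate of the spherically symmetric tree `T_∞^f` exists and
equals `e^{(a+b)/2}` — i.e. `lim_{n→∞} (1/n) Σ_{h<n} log f(h) = (a+b)/2` and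
`lim_n L_n^{1/n} = e^{(a+b)/2}` — but for every fixed `k ≥ 1` the window sums
`Σ_{h=n-k}^{n-1} log f(h)` do not converge as `n → ∞`, and the transfinite fractal
dimension of the truncation sequence `{T_n}` does not exist. -/
theorem sst_example_growth_exists_tau_does_not
    (a b : ℝ) (ha : 0 < a) (hb : 0 < b) (hab : a ≠ b)
    (f : ℕ → ℕ) (hf1 : ∀ h, 1 ≤ f h)
    (hf : ∀ h : ℕ, Real.log (f h) =
      if ∃ m : ℕ, m * (m + 1) < h ∧ h ≤ (m + 1) ^ 2 then a else b) :
    Tendsto (fun n : ℕ => (∑ h ∈ Finset.range n, Real.log (f h)) / (n : ℝ))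
      atTop (nhds ((a + b) / 2)) ∧
    Tendsto (fun n : ℕ => (SSTgen f n : ℝ) ^ ((n : ℝ)⁻¹))
      atTop (nhds (Real.exp ((a + b) / 2))) ∧
    (∀ k : ℕ, 1 ≤ k →
      ¬ ∃ c : ℝ, Tendsto (fun n : ℕ => ∑ h ∈ Finset.Ico (n - k) n, Real.log (f h))
        atTop (nhds c)) ∧
    ¬ ∃ (τ : ℝ) (L : ℕ → ℝ),
        (∀ ℓ : ℕ, Tendsto (fun n : ℕ =>
            Real.log ((coveringNumber (SSTtrunc f n) ℓ : ℝ) /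
              (Nat.card {v : SSTVert f // v.1 ≤ n} : ℝ)) / (-(ℓ : ℝ)))
          atTop (nhds (L ℓ))) ∧
        Tendsto L atTop (nhds τ) :=
  sst_example_growth_exists_tau_does_not_general a b ha hb hab f hf
end
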